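/- arXiv:2405.19500 — 2 statements merged into one kernel-verified Lean document; each statement's English description precedes it below -/
import Mathlib

section
/- Let R > 0 and let E ⊆ S_R = {x ∈ ℝ³ : ‖x‖ = R} be a finite union of circles, i.e., E = ⋃_{k=1}^{n} l_k where each l_k is the (nonempty, non-degenerate) intersection of S_R with an affine plane in ℝ³. Suppose u₁ and u₂ are both harmonic on D = {x : ‖x‖ > R}, continuous on ({x : ‖x‖ ≥ R}) \ E, bounded on {x : ‖x‖ ≥ R}, agree at every point of S_R \ E, and both satisfy uᵢ(x) → 0 as ‖x‖ → ∞. Then u₁(x) = u₂(x) for all x with ‖x‖ > R, i.e., the external Dirichlet generalized harmonic problem has at most one solution. -/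
open scoped RealInnerProductSpace

/-- Euclidean 3-space. -/
abbrev E3 : Type := EuclideanSpace ℝ (Fin 3)

/-- The Laplacian `Δu = ∑ i, ∂²u/∂xᵢ²` of `u : ℝ³ → ℝ`. -/
noncomputable def lap (u : E3 → ℝ) (x : E3) : ℝ :=
  ∑ i : Fin 3,
    fderiv ℝ (fun y => fderiv ℝ u y (EuclideanSpace.single i 1)) x (EuclideanSpace.single i 1)

/-- `u` is harmonic on `U` iff it is twice continuously differentiable on `U`
and its Laplacian vanishes identically on `U`. -/
def IsHarmonicOn (u : E3 → ℝ) (U : Set E3) : Prop :=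
  ContDiffOn ℝ 2 u U ∧ ∀ x ∈ U, lap u x = 0

/-! `w = u₁ - u₂` is harmonic and bounded in the exterior `U` of the sphere and vanishes at infinity
and on the sphere off the circles. For each circle, Appell's trick gives a nonnegative harmonic
function on `U` that blows up at the circle: the real part of `q^(-1/2)`, where
`q(x) = ∑ (xᵢ - pᵢ)²` is the complexified squared distance to a point `p ∈ ℂ³` whose real zero set
is the circle. Let `B` be the sum of these barriers. For `δ > 0`, `w - δ B` tends to `-∞` at the
circles, so the weak maximum principle applies on the bounded superlevel sets `{w - δ B > ε}` and
shows that they are empty. Letting `ε, δ → 0` gives `w ≤ 0`, and symmetrically `w ≥ 0`. -/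

open Filter Set Topology Laplacian InnerProductSpace

section LineDerivatives

variable {E F : Type*} [NormedAddCommGroup E] [NormedSpace ℝ E] [NormedAddCommGroup F]
  [NormedSpace ℝ F]

theorem deriv_deriv_eq_of_hasDerivAt {f f' : ℝ → F} {f'' : F} {a : ℝ}
    (hf : ∀ᶠ t in 𝓝 a, HasDerivAt f (f' t) t) (hf' : HasDerivAt f' f'' a) :
    deriv (deriv f) a = f'' := by
  have hderiv : deriv f =ᶠ[𝓝 a] f' := hf.mono fun t ht => ht.deriv
  rw [hderiv.deriv_eq, hf'.deriv]

theorem fderiv_fderiv_apply_eq_deriv_deriv {f : E → F} {x : E} (hf : ContDiffAt ℝ 2 f x)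
    (v : E) : fderiv ℝ (fderiv ℝ f) x v v = deriv (deriv fun t : ℝ => f (x + t • v)) 0 := by
  have hline : ∀ s : ℝ, HasDerivAt (fun t : ℝ => x + t • v) v s := fun s => by
    simpa using ((hasDerivAt_id s).smul_const v).const_add x
  have hline0 : Tendsto (fun t : ℝ => x + t • v) (𝓝 0) (𝓝 x) := by
    simpa using (hline 0).continuousAt.tendsto
  have hdiff : ∀ᶠ y in 𝓝 x, DifferentiableAt ℝ f y :=
    (hf.eventually (by simp)).mono fun y hy => hy.differentiableAt (by simp)
  have hdiff2 : DifferentiableAt ℝ (fderiv ℝ f) x :=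
    (hf.fderiv_right (m := 1) le_rfl).differentiableAt one_ne_zero
  symm
  refine deriv_deriv_eq_of_hasDerivAt (f' := fun t => fderiv ℝ f (x + t • v) v) ?_ ?_
  · filter_upwards [hline0.eventually hdiff] with t ht
    exact ht.hasFDerivAt.comp_hasDerivAt t (hline t)
  · have hx : x + (0 : ℝ) • v = x := by simp
    have hD : HasFDerivAt (fderiv ℝ f) (fderiv ℝ (fderiv ℝ f) x) (x + (0 : ℝ) • v) := by
      rw [hx]
      exact hdiff2.hasFDerivAt
    have hcomp : HasDerivAt (fun t : ℝ => fderiv ℝ f (x + t • v))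
        (fderiv ℝ (fderiv ℝ f) x v) 0 :=
      hD.comp_hasDerivAt (0 : ℝ) (hline 0)
    simpa using hcomp.clm_apply (hasDerivAt_const 0 v)

end LineDerivatives

theorem IsLocalMax.deriv_deriv_nonpos {f : ℝ → ℝ} {a : ℝ} (h : IsLocalMax f a)
    (hc : ContinuousAt f a) : deriv (deriv f) a ≤ 0 := by
  by_contra! hpos
  have hmin : IsLocalMin f a := isLocalMin_of_deriv_deriv_pos hpos h.deriv_eq_zero hc
  -- a local maximum that is also a local minimum is locally constant
  have hconst : f =ᶠ[𝓝 a] fun _ => f a := (hmin.and h).mono fun t ht => le_antisymm ht.2 ht.1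
  have hderiv : deriv f =ᶠ[𝓝 a] 0 :=
    hconst.eventuallyEq_nhds.mono fun t ht => by rw [ht.deriv_eq]; simp
  simp [hderiv.deriv_eq] at hpos

section MaximumPrinciple

variable {E : Type*} [NormedAddCommGroup E] [InnerProductSpace ℝ E] [FiniteDimensional ℝ E]

theorem laplacian_eq_sum_deriv_deriv {ι F : Type*} [Fintype ι] [NormedAddCommGroup F]
    [NormedSpace ℝ F] {f : E → F} {x : E} (hf : ContDiffAt ℝ 2 f x)
    (v : OrthonormalBasis ι ℝ E) :
    Δ f x = ∑ i, deriv (deriv fun t : ℝ => f (x + t • v i)) 0 := by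
  simp only [laplacian_eq_iteratedFDeriv_orthonormalBasis f v, iteratedFDeriv_two_apply,
    Matrix.cons_val_zero, Matrix.cons_val_one, fderiv_fderiv_apply_eq_deriv_deriv hf]

theorem not_isLocalMax_of_laplacian_pos {f : E → ℝ} {x : E} (hf : ContDiffAt ℝ 2 f x)
    (hΔ : 0 < Δ f x) : ¬IsLocalMax f x := by
  intro hmax
  rw [laplacian_eq_sum_deriv_deriv hf (stdOrthonormalBasis ℝ E)] at hΔ
  refine hΔ.not_ge (Finset.sum_nonpos fun i _ => ?_)
  set v := stdOrthonormalBasis ℝ E i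
  have hline : ContinuousAt (fun t : ℝ => x + t • v) 0 := by fun_prop
  have hmax' : IsLocalMax (f ∘ fun t : ℝ => x + t • v) 0 :=
    IsLocalMax.comp_continuous (by simpa using hmax) hline
  exact hmax'.deriv_deriv_nonpos (ContinuousAt.comp (by simpa using hf.continuousAt) hline)

theorem laplacian_norm_sq (x : E) : Δ (fun y : E => ‖y‖ ^ 2) x = 2 * Module.finrank ℝ E := by
  have hline : ∀ (v : E) (s : ℝ), HasDerivAt (fun t : ℝ => x + t • v) v s := fun v s => by
    simpa using ((hasDerivAt_id s).smul_const v).const_add x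
  have hsecond : ∀ v : E, ‖v‖ = 1 → deriv (deriv fun t : ℝ => ‖x + t • v‖ ^ 2) 0 = 2 := by
    intro v hv
    refine deriv_deriv_eq_of_hasDerivAt (f' := fun t => 2 * ⟪x + t • v, v⟫)
      (Eventually.of_forall fun t => (hline v t).norm_sq) ?_
    simpa [real_inner_self_eq_norm_sq, hv] using
      ((hline v 0).inner ℝ (hasDerivAt_const 0 v)).const_mul 2
  rw [laplacian_eq_sum_deriv_deriv (contDiff_norm_sq ℝ).contDiffAt (stdOrthonormalBasis ℝ E)]
  simp [hsecond _ ((stdOrthonormalBasis ℝ E).orthonormal.1 _), mul_comm]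

theorem InnerProductSpace.HarmonicOnNhd.le_of_forall_mem_frontier_le [Nontrivial E] {Ω : Set E}
    {g : E → ℝ} (hg : HarmonicOnNhd g Ω) (hΩ : IsOpen Ω) (hb : Bornology.IsBounded Ω)
    (hgc : ContinuousOn g (closure Ω)) {C : ℝ} (hC : ∀ x ∈ frontier Ω, g x ≤ C) :
    ∀ x ∈ closure Ω, g x ≤ C := by
  obtain ⟨r, hr⟩ := isBounded_iff_forall_norm_le.1 hb.closure
  have hnorm : ContDiff ℝ 2 (fun y : E => ‖y‖ ^ 2) := contDiff_norm_sq ℝ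
  have hperturbed : ∀ η > 0, ∀ x ∈ closure Ω, g x ≤ C + η * r ^ 2 := by
    intro η hη x hx
    set h : E → ℝ := g + η • fun y => ‖y‖ ^ 2
    obtain ⟨z, hz, hzmax⟩ := hb.isCompact_closure.exists_isMaxOn (f := h) ⟨x, hx⟩
      (hgc.add (hnorm.continuous.const_smul η).continuousOn)
    -- `Δ h = 2 η dim E > 0` on `Ω`, so the maximum of `h` is on the frontier
    have hzΩ : z ∉ Ω := fun hzΩ => by
      have hh : ContDiffAt ℝ 2 (η • fun y : E => ‖y‖ ^ 2) z := hnorm.contDiffAt.const_smul η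
      refine not_isLocalMax_of_laplacian_pos (f := h) ((hg z hzΩ).1.add hh) ?_
        (hzmax.isLocalMax (mem_of_superset (hΩ.mem_nhds hzΩ) subset_closure))
      change 0 < Δ (g + η • fun y : E => ‖y‖ ^ 2) z
      rw [(hg z hzΩ).1.laplacian_add hh, laplacian_smul η hnorm.contDiffAt, laplacian_norm_sq,
        (hg z hzΩ).2.eq_of_nhds]
      have : (0 : ℝ) < Module.finrank ℝ E := by exact_mod_cast Module.finrank_pos
      simp only [Pi.zero_apply, smul_eq_mul, zero_add]
      positivity
    have hgz : g z ≤ C := hC z (hΩ.frontier_eq ▸ ⟨hz, hzΩ⟩)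
    have hxz : h x ≤ h z := hzmax hx
    have hzr : ‖z‖ ^ 2 ≤ r ^ 2 := pow_le_pow_left₀ (norm_nonneg z) (hr z hz) 2
    simp only [h, Pi.add_apply, Pi.smul_apply, smul_eq_mul] at hxz
    nlinarith [mul_le_mul_of_nonneg_left hzr hη.le, mul_nonneg hη.le (sq_nonneg ‖x‖)]
  intro x hx
  refine le_of_forall_pos_le_add fun ε hε => ?_
  have hxε := hperturbed (ε / (r ^ 2 + 1)) (by positivity) x hx
  have hε' : ε / (r ^ 2 + 1) * r ^ 2 ≤ ε := by
    rw [div_mul_eq_mul_div, div_le_iff₀ (by positivity)]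
    nlinarith
  linarith

end MaximumPrinciple

theorem notMem_closure_of_tendsto_atTop {X : Type*} [TopologicalSpace X] {U Ω : Set X}
    {B : X → ℝ} {p : X} {C : ℝ} (hB : Tendsto B (𝓝[U] p) atTop) (hΩ : Ω ⊆ U)
    (hC : ∀ y ∈ Ω, B y ≤ C) : p ∉ closure Ω := by
  intro hp
  have := mem_closure_iff_nhdsWithin_neBot.1 hp
  obtain ⟨y, hyC, hyΩ⟩ :=
    (((hB.mono_left (nhdsWithin_mono p hΩ)).eventually_gt_atTop C).and self_mem_nhdsWithin).exists
  exact (hC y hyΩ).not_gt hyC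

section Barrier

variable {E : Type*} [NormedAddCommGroup E] [InnerProductSpace ℝ E] [FiniteDimensional ℝ E]

theorem InnerProductSpace.HarmonicAt.finset_sum {ι : Type*} (s : Finset ι) {f : ι → E → ℝ}
    {x : E} (h : ∀ i ∈ s, HarmonicAt (f i) x) : HarmonicAt (∑ i ∈ s, f i) x := by
  induction s using Finset.cons_induction with
  | empty => exact harmonicAt_const 0
  | cons a s ha ih =>
    rw [Finset.sum_cons]
    exact (h a (Finset.mem_cons_self a s)).add (ih fun i hi => h i (Finset.mem_cons_of_mem hi))

structure IsBarrier (U K : Set E) (B : E → ℝ) : Prop where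
  nonneg : ∀ x, 0 ≤ B x
  harmonicOnNhd : HarmonicOnNhd B U
  continuousOn : ContinuousOn B (closure U \ K)
  tendsto_atTop : ∀ p ∈ K, Tendsto B (𝓝[U] p) atTop

theorem IsBarrier.sum {ι : Type*} [Fintype ι] {U : Set E} {K : ι → Set E} {B : ι → E → ℝ}
    (hB : ∀ i, IsBarrier U (K i) (B i)) : IsBarrier U (⋃ i, K i) (∑ i, B i) where
  nonneg x := by simpa using Finset.sum_nonneg fun i _ => (hB i).nonneg x
  harmonicOnNhd x hx := HarmonicAt.finset_sum _ fun i _ => (hB i).harmonicOnNhd x hx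
  continuousOn := by
    rw [Finset.sum_fn]
    exact continuousOn_finsetSum _ fun i _ =>
      (hB i).continuousOn.mono (sdiff_subset_sdiff_right (subset_iUnion K i))
  tendsto_atTop p hp := by
    obtain ⟨i, hi⟩ := mem_iUnion.1 hp
    refine tendsto_atTop_mono (fun x => ?_) ((hB i).tendsto_atTop p hi)
    simpa using Finset.single_le_sum (fun j _ => (hB j).nonneg x) (Finset.mem_univ i)

variable [Nontrivial E] {U K : Set E} {B w : E → ℝ}

theorem IsBarrier.sub_mul_le (hB : IsBarrier U K B) (hU : IsOpen U) (hw : HarmonicOnNhd w U)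
    (hwc : ContinuousOn w (closure U \ K)) (hwM : ∃ M, ∀ x ∈ U, w x ≤ M)
    (hfr : ∀ x ∈ frontier U, x ∉ K → w x ≤ 0)
    (hinf : ∀ ε > 0, ∀ᶠ x in Bornology.cobounded E, w x < ε) {ε δ : ℝ} (hε : 0 < ε)
    (hδ : 0 < δ) : ∀ x ∈ U, w x - δ * B x ≤ ε := by
  obtain ⟨M, hM⟩ := hwM
  set g : E → ℝ := w - δ • B
  have hgx : ∀ x, g x = w x - δ * B x := fun x => rfl
  -- `Ω` is bounded because `w < ε` near infinity, and its closure misses `K` because `B` blows up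
  -- there, so the maximum principle applies on `Ω` and forces `Ω = ∅`.
  set Ω := U ∩ {x | ε < g x}
  have hΩo : IsOpen Ω :=
    (hw.contDiffOn.continuousOn.sub (hB.harmonicOnNhd.contDiffOn.continuousOn.const_smul δ)
      |>.isOpen_inter_preimage hU isOpen_Ioi)
  have hΩb : Bornology.IsBounded Ω := by
    have hbdd : Bornology.IsBounded {x | w x < ε}ᶜ :=
      Bornology.isBounded_def.2 (by rw [compl_compl]; exact hinf ε hε)
    refine hbdd.subset fun x hx => ?_
    show ¬w x < ε
    exact not_lt.2 (by nlinarith [hB.nonneg x, hgx x, hx.2.out])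
  have hK : ∀ p ∈ closure Ω, p ∉ K := fun p hp hpK =>
    notMem_closure_of_tendsto_atTop (C := (M - ε) / δ) (hB.tendsto_atTop p hpK)
      inter_subset_left (fun y hy => by
        rw [le_div_iff₀ hδ]
        nlinarith [hM y hy.1, hgx y, hy.2.out]) hp
  have hclU : closure Ω ⊆ closure U := closure_mono inter_subset_left
  have hfront : ∀ x ∈ frontier Ω, g x ≤ ε := by
    intro x hx
    rw [hΩo.frontier_eq] at hx
    by_cases hxU : x ∈ U
    · exact not_lt.1 fun h => hx.2 ⟨hxU, h⟩
    · nlinarith [hfr x (hU.frontier_eq ▸ ⟨hclU hx.1, hxU⟩) (hK x hx.1), hB.nonneg x, hgx x]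
  have hmax := HarmonicOnNhd.le_of_forall_mem_frontier_le
    (fun x hx => (hw x hx.1).sub (hB.harmonicOnNhd x hx.1).const_smul) hΩo hΩb
    ((hwc.sub (hB.continuousOn.const_smul δ)).mono fun p hp => ⟨hclU hp, hK p hp⟩) hfront
  intro x hx
  by_contra! hεx
  exact (hmax x (subset_closure ⟨hx, hεx⟩)).not_gt hεx

theorem IsBarrier.nonpos_of_harmonicOnNhd (hB : IsBarrier U K B) (hU : IsOpen U)
    (hw : HarmonicOnNhd w U) (hwc : ContinuousOn w (closure U \ K))
    (hwM : ∃ M, ∀ x ∈ U, w x ≤ M) (hfr : ∀ x ∈ frontier U, x ∉ K → w x ≤ 0)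
    (hinf : ∀ ε > 0, ∀ᶠ x in Bornology.cobounded E, w x < ε) : ∀ x ∈ U, w x ≤ 0 := by
  intro x hx
  refine le_of_forall_pos_le_add fun ε hε => ?_
  have hBx := hB.nonneg x
  have hlevel := hB.sub_mul_le hU hw hwc hwM hfr hinf (half_pos hε)
    (show 0 < ε / (2 * (B x + 1)) by positivity) x hx
  have hδ : ε / (2 * (B x + 1)) * B x ≤ ε / 2 := by
    rw [div_mul_eq_mul_div, div_le_iff₀ (by positivity)]
    nlinarith
  linarith

theorem IsBarrier.eq_zero_of_harmonicOnNhd (hB : IsBarrier U K B) (hU : IsOpen U)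
    (hw : HarmonicOnNhd w U) (hwc : ContinuousOn w (closure U \ K))
    (hwM : ∃ M, ∀ x ∈ U, |w x| ≤ M) (hfr : ∀ x ∈ frontier U, x ∉ K → w x = 0)
    (hinf : Tendsto w (Bornology.cobounded E) (𝓝 0)) : ∀ x ∈ U, w x = 0 := by
  obtain ⟨M, hM⟩ := hwM
  have hlt : ∀ v : E → ℝ, Tendsto v (Bornology.cobounded E) (𝓝 0) →
      ∀ ε > 0, ∀ᶠ x in Bornology.cobounded E, v x < ε := fun v hv ε hε =>
    hv.eventually (gt_mem_nhds hε)
  intro x hx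
  have hle := hB.nonpos_of_harmonicOnNhd hU hw hwc ⟨M, fun y hy => (abs_le.1 (hM y hy)).2⟩
    (fun y hy hyK => (hfr y hy hyK).le) (hlt w hinf) x hx
  have hge := hB.nonpos_of_harmonicOnNhd hU hw.neg hwc.neg
    ⟨M, fun y hy => neg_le.1 (abs_le.1 (hM y hy)).1⟩
    (fun y hy hyK => by simp [hfr y hy hyK]) (hlt _ (by rw [← neg_zero]; exact hinf.neg)) x hx
  exact le_antisymm hle (neg_nonpos.1 hge)

end Barrier

theorem lap_eq_laplacian {u : E3 → ℝ} {x : E3} (hu : ContDiffAt ℝ 2 u x) : lap u x = Δ u x := by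
  have hdiff2 : DifferentiableAt ℝ (fderiv ℝ u) x :=
    (hu.fderiv_right (m := 1) le_rfl).differentiableAt one_ne_zero
  rw [laplacian_eq_iteratedFDeriv_orthonormalBasis u (EuclideanSpace.basisFun (Fin 3) ℝ)]
  refine Finset.sum_congr rfl fun i _ => ?_
  rw [iteratedFDeriv_two_apply, fderiv_clm_apply hdiff2 (differentiableAt_const _)]
  simp

theorem IsHarmonicOn.harmonicOnNhd {u : E3 → ℝ} {U : Set E3} (hu : IsHarmonicOn u U)
    (hU : IsOpen U) : HarmonicOnNhd u U := fun x hx =>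
  ⟨hu.1.contDiffAt (hU.mem_nhds hx), by
    filter_upwards [hU.mem_nhds hx] with y hy
    rw [← lap_eq_laplacian (hu.1.contDiffAt (hU.mem_nhds hy)), hu.2 y hy]
    rfl⟩

section AppellPotential

open Complex

noncomputable def complexSqDist (p : Fin 3 → ℂ) (x : E3) : ℂ := ∑ i, ((x i : ℂ) - p i) ^ 2

theorem complexSqDist_add_smul_single (p : Fin 3 → ℂ) (x : E3) (i : Fin 3) (t : ℝ) :
    complexSqDist p (x + t • EuclideanSpace.single i 1) =
      complexSqDist p x + 2 * t * ((x i : ℂ) - p i) + t ^ 2 := by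
  simp only [complexSqDist, Fin.sum_univ_three]
  fin_cases i <;> simp <;> ring

theorem contDiff_complexSqDist (p : Fin 3 → ℂ) : ContDiff ℝ 2 (complexSqDist p) :=
  ContDiff.sum fun i _ =>
    ((ofRealCLM.contDiff.comp (EuclideanSpace.proj (𝕜 := ℝ) i).contDiff).sub contDiff_const).pow 2

theorem deriv_deriv_cpow_quadratic {Q : ℂ} (hQ : Q ∈ slitPlane) (w c : ℂ) :
    deriv (deriv fun t : ℝ => (Q + 2 * t * w + t ^ 2) ^ c) 0 =
      c * (c - 1) * Q ^ (c - 2) * (2 * w) ^ 2 + 2 * c * Q ^ (c - 1) := by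
  set g : ℂ → ℂ := fun s => Q + 2 * s * w + s ^ 2
  have hg : ∀ s, HasDerivAt g (2 * w + 2 * s) s := fun s => by
    simpa [g, mul_comm] using
      ((((hasDerivAt_id s).const_mul 2).mul_const w).const_add Q).fun_add (hasDerivAt_pow 2 s)
  have hg0 : g 0 = Q := by simp [g]
  have hslit : ∀ᶠ s in 𝓝 (0 : ℂ), g s ∈ slitPlane :=
    (hg 0).continuousAt.preimage_mem_nhds (isOpen_slitPlane.mem_nhds (hg0 ▸ hQ))
  refine deriv_deriv_eq_of_hasDerivAt
    (f' := fun t : ℝ => c * g t ^ (c - 1) * (2 * w + 2 * t)) ?_ ?_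
  · filter_upwards [(continuous_ofReal.tendsto' 0 0 ofReal_zero).eventually hslit] with t ht
    exact ((hg t).cpow_const ht).comp_ofReal
  · have h1 : HasDerivAt (fun s => c * g s ^ (c - 1))
        (c * ((c - 1) * g 0 ^ (c - 1 - 1) * (2 * w + 2 * 0))) 0 :=
      ((hg 0).cpow_const (c := c - 1) (hg0 ▸ hQ)).const_mul c
    have h2 : HasDerivAt (fun s : ℂ => 2 * w + 2 * s) 2 0 := by
      simpa using ((hasDerivAt_id (0 : ℂ)).const_mul 2).const_add (2 * w)
    refine ((h1.fun_mul h2).comp_ofReal (z := 0)).congr_deriv ?_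
    rw [hg0, show c - 1 - 1 = c - 2 by ring]
    ring

theorem harmonicAt_complexSqDist_cpow (p : Fin 3 → ℂ) {x : E3}
    (hx : complexSqDist p x ∈ slitPlane) :
    HarmonicAt (fun y => complexSqDist p y ^ (-2⁻¹ : ℂ)) x := by
  have hcd : ∀ y, complexSqDist p y ∈ slitPlane →
      ContDiffAt ℝ 2 (fun y => complexSqDist p y ^ (-2⁻¹ : ℂ)) y := fun y hy =>
    ContDiffAt.comp (g := fun z : ℂ => z ^ (-2⁻¹ : ℂ)) y
      ((analyticAt_id.cpow analyticAt_const hy).contDiffAt.restrict_scalars ℝ)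
      (contDiff_complexSqDist p).contDiffAt
  refine ⟨hcd x hx, ?_⟩
  filter_upwards [(contDiff_complexSqDist p).continuous.continuousAt.preimage_mem_nhds
    (isOpen_slitPlane.mem_nhds hx)] with y hy
  rw [laplacian_eq_sum_deriv_deriv (hcd y hy) (EuclideanSpace.basisFun (Fin 3) ℝ)]
  simp only [EuclideanSpace.basisFun_apply, complexSqDist_add_smul_single,
    deriv_deriv_cpow_quadratic hy, Pi.zero_apply, Fin.sum_univ_three]
  -- with `wᵢ = yᵢ - pᵢ` and `∑ wᵢ² = Q`, the sum is `2c (2c + 1) Q^(c-1)`, zero for `c = -1/2`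
  set c : ℂ := -2⁻¹ with hc
  set Q := complexSqDist p y
  have hsum : Q = ∑ i, ((y i : ℂ) - p i) ^ 2 := rfl
  rw [Fin.sum_univ_three] at hsum
  have hpow : Q ^ (c - 1) = Q ^ (c - 2) * Q := by
    rw [show c - 1 = c - 2 + 1 by ring, cpow_add _ _ (slitPlane_ne_zero hy), cpow_one]
  have hc' : 2 * c + 1 = 0 := by rw [hc]; ring
  linear_combination (-4 * c * (c - 1) * Q ^ (c - 2)) * hsum + (-4 * c * (c - 1)) * hpow +
    (2 * c * Q ^ (c - 1)) * hc'

end AppellPotential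

section SquareRoot

open Complex

theorem re_cpow_inv_two_nonneg (z : ℂ) : 0 ≤ (z ^ (2⁻¹ : ℂ)).re := by
  rcases eq_or_ne z 0 with rfl | hz
  · simp
  rw [cpow_def_of_ne_zero hz, exp_re]
  refine mul_nonneg (Real.exp_pos _).le (Real.cos_nonneg_of_mem_Icc ?_)
  have him : (log z * 2⁻¹).im = arg z / 2 := by simp [log_im, div_eq_mul_inv]
  rw [him]
  constructor <;> linarith [neg_pi_lt_arg z, arg_le_pi z]

theorem cpow_inv_two_sq (z : ℂ) : (z ^ (2⁻¹ : ℂ)) ^ 2 = z := by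
  exact_mod_cast cpow_nat_inv_pow z two_ne_zero

theorem re_cpow_inv_two_ge {τ : ℝ} {z : ℂ} (h : τ * ‖z‖ ≤ ‖z‖ + z.re) :
    τ / 2 * ‖z ^ (2⁻¹ : ℂ)‖ ≤ (z ^ (2⁻¹ : ℂ)).re := by
  set w := z ^ (2⁻¹ : ℂ)
  have hw : w ^ 2 = z := cpow_inv_two_sq z
  have hnorm : ‖w‖ ^ 2 = w.re ^ 2 + w.im ^ 2 := by rw [Complex.sq_norm, normSq_apply]; ring
  have hnz : ‖z‖ = ‖w‖ ^ 2 := by rw [← hw, norm_pow]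
  have hrez : z.re = w.re ^ 2 - w.im ^ 2 := by rw [← hw]; simp [sq]
  have hre : 0 ≤ w.re := re_cpow_inv_two_nonneg z
  have hle : w.re ≤ ‖w‖ := re_le_norm w
  rcases (norm_nonneg w).eq_or_lt with h0 | hpos
  · rw [← h0, mul_zero]
    exact hre
  rw [hnz] at h
  refine le_of_mul_le_mul_right ?_ hpos
  nlinarith

theorem re_cpow_neg_inv_two_nonneg (z : ℂ) : 0 ≤ (z ^ (-2⁻¹ : ℂ)).re := by
  rw [cpow_neg, inv_re]
  exact div_nonneg (re_cpow_inv_two_nonneg z) (normSq_nonneg _)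

theorem tendsto_re_cpow_neg_inv_two_atTop {α : Type*} {l : Filter α} {f : α → ℂ} {τ : ℝ}
    (hτ : 0 < τ) (hf : Tendsto f l (𝓝[≠] 0))
    (hsec : ∀ᶠ a in l, τ * ‖f a‖ ≤ ‖f a‖ + (f a).re) :
    Tendsto (fun a => (f a ^ (-2⁻¹ : ℂ)).re) l atTop := by
  have hsqrt : ContinuousAt (fun z : ℂ => z ^ (2⁻¹ : ℂ)) 0 :=
    continuousAt_cpow_const_of_re_pos (Or.inl le_rfl) (by norm_num)
  have hnorm : Tendsto (fun a => ‖f a ^ (2⁻¹ : ℂ)‖) l (𝓝[>] 0) := by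
    refine tendsto_nhdsWithin_iff.2 ⟨?_, ?_⟩
    · simpa using (hsqrt.tendsto.comp (tendsto_nhdsWithin_iff.1 hf).1).norm
    · filter_upwards [(tendsto_nhdsWithin_iff.1 hf).2] with a ha
      refine norm_pos_iff.2 fun h0 => ha ?_
      rw [← cpow_inv_two_sq (f a), h0, zero_pow two_ne_zero]
      exact mem_singleton 0
  refine tendsto_atTop_mono' l ?_
    ((tendsto_inv_nhdsGT_zero.comp hnorm).const_mul_atTop (half_pos hτ))
  filter_upwards [hsec] with a ha
  rw [Function.comp_apply, cpow_neg, inv_re, normSq_eq_norm_sq]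
  rcases (norm_nonneg (f a ^ (2⁻¹ : ℂ))).eq_or_lt with h0 | hpos
  · simp [← h0]
  rw [le_div_iff₀ (by positivity)]
  calc τ / 2 * ‖f a ^ (2⁻¹ : ℂ)‖⁻¹ * ‖f a ^ (2⁻¹ : ℂ)‖ ^ 2 = τ / 2 * ‖f a ^ (2⁻¹ : ℂ)‖ := by
        field_simp
    _ ≤ _ := re_cpow_inv_two_ge ha

theorem mul_norm_le_norm_add_re {b c : ℝ} (hc : 0 < c) {z : ℂ} (hz : 0 ≤ c * z.re + b * z.im) :
    c ^ 2 / (2 * (b ^ 2 + c ^ 2)) * ‖z‖ ≤ ‖z‖ + z.re := by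
  have hnorm : ‖z‖ ^ 2 = z.re ^ 2 + z.im ^ 2 := by rw [Complex.sq_norm, normSq_apply]; ring
  have hre : |z.re| ≤ ‖z‖ := abs_re_le_norm z
  rw [div_mul_eq_mul_div, div_le_iff₀ (by positivity)]
  rcases le_or_gt 0 z.re with h | h
  · nlinarith [norm_nonneg z, sq_nonneg b, sq_nonneg c]
  have hpos : 0 < ‖z‖ := by linarith [(abs_le.1 hre).1]
  have hsq : c ^ 2 * z.re ^ 2 ≤ b ^ 2 * z.im ^ 2 := by
    nlinarith [mul_pos hc (neg_pos.2 h)]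
  have him : z.im ^ 2 ≤ (‖z‖ + z.re) * (2 * ‖z‖) := by nlinarith [sq_nonneg (‖z‖ + z.re)]
  refine le_of_mul_le_mul_right ?_ hpos
  nlinarith [mul_le_mul_of_nonneg_left him (by positivity : 0 ≤ b ^ 2 + c ^ 2)]

end SquareRoot

section CircleBarrier

open Complex

theorem complexSqDist_mul_left (α : ℂ) {a : E3} (ha : ‖a‖ = 1) (x : E3) :
    complexSqDist (fun i => α * a i) x = (‖x‖ ^ 2 : ℝ) - 2 * α * (⟪a, x⟫ : ℝ) + α ^ 2 := by
  have hx : ‖x‖ ^ 2 = ∑ i, x i ^ 2 := EuclideanSpace.real_norm_sq_eq x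
  have ha2 : ∑ i, a i ^ 2 = 1 := by rw [← EuclideanSpace.real_norm_sq_eq, ha, one_pow]
  have hin : ⟪a, x⟫ = ∑ i, a i * x i := by simp [PiLp.inner_apply, mul_comm]
  rw [Fin.sum_univ_three] at hx ha2 hin
  have ha2' : (a 0 : ℂ) ^ 2 + (a 1 : ℂ) ^ 2 + (a 2 : ℂ) ^ 2 = 1 := by exact_mod_cast ha2
  simp only [complexSqDist, Fin.sum_univ_three, hx, hin]
  push_cast
  linear_combination α ^ 2 * ha2'

/-- Appell's trick: among real points, the complexified squared distance to this point of `ℂ³`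
vanishes exactly on the circle `‖x‖ = R, ⟪a, x⟫ = b` (for `‖a‖ = 1`, `|b| < R`). -/
noncomputable def circlePole (R b : ℝ) (a : E3) : Fin 3 → ℂ :=
  fun i => (b - √(R ^ 2 - b ^ 2) * I) * a i

variable {R b : ℝ} {a : E3}

theorem re_complexSqDist_circlePole (ha : ‖a‖ = 1) (hb : |b| < R) (x : E3) :
    (complexSqDist (circlePole R b a) x).re = ‖x‖ ^ 2 - R ^ 2 - 2 * b * (⟪a, x⟫ - b) := by
  have hc := Real.sq_sqrt (show 0 ≤ R ^ 2 - b ^ 2 by nlinarith [abs_lt.1 hb])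
  change (complexSqDist (fun i => ((b : ℂ) - √(R ^ 2 - b ^ 2) * I) * a i) x).re = _
  rw [complexSqDist_mul_left _ ha]
  simp only [sq] at hc
  simp [sq]
  linarith

theorem im_complexSqDist_circlePole (ha : ‖a‖ = 1) (x : E3) :
    (complexSqDist (circlePole R b a) x).im = 2 * √(R ^ 2 - b ^ 2) * (⟪a, x⟫ - b) := by
  change (complexSqDist (fun i => ((b : ℂ) - √(R ^ 2 - b ^ 2) * I) * a i) x).im = _
  rw [complexSqDist_mul_left _ ha]
  simp [sq]
  ring

theorem complexSqDist_circlePole_mem_slitPlane (ha : ‖a‖ = 1) (hb : |b| < R) {x : E3}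
    (hx : R ≤ ‖x‖) (hxC : ¬(‖x‖ = R ∧ ⟪a, x⟫ = b)) :
    complexSqDist (circlePole R b a) x ∈ slitPlane := by
  have hc : 0 < √(R ^ 2 - b ^ 2) := Real.sqrt_pos.2 (by nlinarith [abs_lt.1 hb])
  rw [mem_slitPlane_iff, re_complexSqDist_circlePole ha hb, im_complexSqDist_circlePole ha]
  by_cases ht : ⟪a, x⟫ = b
  · have hxR : R < ‖x‖ := lt_of_le_of_ne hx fun h => hxC ⟨h.symm, ht⟩
    left
    rw [ht]
    nlinarith [abs_lt.1 hb]
  · exact Or.inr (mul_ne_zero (mul_pos two_pos hc).ne' (sub_ne_zero.2 ht))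

theorem isBarrier_circle (ha : ‖a‖ = 1) (hb : |b| < R) :
    IsBarrier {x : E3 | R < ‖x‖} {x | ‖x‖ = R ∧ ⟪a, x⟫ = b}
      fun x => (complexSqDist (circlePole R b a) x ^ (-2⁻¹ : ℂ)).re := by
  have hc : 0 < √(R ^ 2 - b ^ 2) := Real.sqrt_pos.2 (by nlinarith [abs_lt.1 hb])
  have hR : 0 < R := (abs_nonneg b).trans_lt hb
  have hslit := fun x => complexSqDist_circlePole_mem_slitPlane (x := x) ha hb
  have hharm : ∀ x, R ≤ ‖x‖ → ¬(‖x‖ = R ∧ ⟪a, x⟫ = b) →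
      HarmonicAt (fun x => (complexSqDist (circlePole R b a) x ^ (-2⁻¹ : ℂ)).re) x :=
    fun x hx hxC => (harmonicAt_complexSqDist_cpow _ (hslit x hx hxC)).comp_CLM reCLM
  refine ⟨fun x => re_cpow_neg_inv_two_nonneg _, fun x hx => hharm x hx.le fun h => hx.ne' h.1,
    fun x hx => ?_, ?_⟩
  · exact (hharm x (closure_lt_subset_le continuous_const continuous_norm hx.1)
      hx.2).1.continuousAt.continuousWithinAt
  rintro p ⟨hp, hpb⟩
  have hq0 : complexSqDist (circlePole R b a) p = 0 := Complex.ext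
    (by rw [re_complexSqDist_circlePole ha hb, hp, hpb]; simp)
    (by rw [im_complexSqDist_circlePole ha, hpb]; simp)
  refine tendsto_re_cpow_neg_inv_two_atTop (τ := √(R ^ 2 - b ^ 2) ^ 2 /
    (2 * (b ^ 2 + √(R ^ 2 - b ^ 2) ^ 2))) (by positivity) (tendsto_nhdsWithin_iff.2 ⟨?_, ?_⟩) ?_
  · exact hq0 ▸ ((contDiff_complexSqDist _).continuous.tendsto p).mono_left nhdsWithin_le_nhds
  · exact eventually_nhdsWithin_of_forall fun x (hx : R < ‖x‖) =>
      slitPlane_ne_zero (hslit x hx.le fun h => hx.ne' h.1)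
  · refine eventually_nhdsWithin_of_forall fun x (hx : R < ‖x‖) => mul_norm_le_norm_add_re hc ?_
    rw [re_complexSqDist_circlePole ha hb, im_complexSqDist_circlePole ha]
    nlinarith [mul_nonneg hc.le (sub_nonneg.2 (pow_le_pow_left₀ hR.le hx.le 2))]

theorem exists_isBarrier_circle (ha : a ≠ 0) (hb : |b| < R * ‖a‖) :
    ∃ B, IsBarrier {x : E3 | R < ‖x‖} {x | ‖x‖ = R ∧ ⟪a, x⟫ = b} B := by
  have hna : 0 < ‖a‖ := norm_pos_iff.2 ha
  have hcircle : {x : E3 | ‖x‖ = R ∧ ⟪a, x⟫ = b} =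
      {x | ‖x‖ = R ∧ ⟪‖a‖⁻¹ • a, x⟫ = b / ‖a‖} := by
    ext x
    simp only [mem_ofPred_eq, real_inner_smul_left]
    rw [inv_mul_eq_div, div_left_inj' hna.ne']
  rw [hcircle]
  exact ⟨_, isBarrier_circle (norm_smul_inv_norm ha)
    (by rwa [abs_div, abs_norm, div_lt_iff₀ hna])⟩

end CircleBarrier

theorem exterior_generalized_dirichlet_unique_general
    (R : ℝ) (n : ℕ) (l : Fin n → Set E3)
    (hl : ∀ k : Fin n, ∃ (a : E3) (b : ℝ), a ≠ 0 ∧ |b| < R * ‖a‖ ∧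
      l k = {x : E3 | ‖x‖ = R ∧ (inner ℝ a x : ℝ) = b})
    (u₁ u₂ : E3 → ℝ)
    (hharm₁ : IsHarmonicOn u₁ {x : E3 | R < ‖x‖})
    (hharm₂ : IsHarmonicOn u₂ {x : E3 | R < ‖x‖})
    (hcont₁ : ContinuousOn u₁ ({x : E3 | R ≤ ‖x‖} \ ⋃ k, l k))
    (hcont₂ : ContinuousOn u₂ ({x : E3 | R ≤ ‖x‖} \ ⋃ k, l k))
    (hbdd₁ : ∃ c : ℝ, ∀ x : E3, R ≤ ‖x‖ → |u₁ x| ≤ c)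
    (hbdd₂ : ∃ c : ℝ, ∀ x : E3, R ≤ ‖x‖ → |u₂ x| ≤ c)
    (hagree : ∀ y : E3, ‖y‖ = R → y ∉ ⋃ k, l k → u₁ y = u₂ y)
    (hdecay₁ : Filter.Tendsto u₁ (Filter.comap norm Filter.atTop) (nhds 0))
    (hdecay₂ : Filter.Tendsto u₂ (Filter.comap norm Filter.atTop) (nhds 0)) :
    ∀ x : E3, R < ‖x‖ → u₁ x = u₂ x := by
  have hU : IsOpen {x : E3 | R < ‖x‖} := isOpen_lt continuous_const continuous_norm
  have hB : ∀ k, ∃ B, IsBarrier {x : E3 | R < ‖x‖} (l k) B := fun k => by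
    obtain ⟨a, b, ha, hb, hlk⟩ := hl k
    rw [hlk]
    exact exists_isBarrier_circle ha hb
  choose B hB using hB
  obtain ⟨c₁, hc₁⟩ := hbdd₁
  obtain ⟨c₂, hc₂⟩ := hbdd₂
  have hzero := (IsBarrier.sum hB).eq_zero_of_harmonicOnNhd hU
    ((hharm₁.harmonicOnNhd hU).sub (hharm₂.harmonicOnNhd hU))
    ((hcont₁.sub hcont₂).mono
      (sdiff_subset_sdiff_left (closure_lt_subset_le continuous_const continuous_norm)))
    ⟨c₁ + c₂, fun y hy => (abs_sub _ _).trans (add_le_add (hc₁ y hy.le) (hc₂ y hy.le))⟩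
    (fun y hy hyK => sub_eq_zero.2
      (hagree y (frontier_lt_subset_eq continuous_const continuous_norm hy).symm hyK))
    (by rw [← comap_norm_atTop, ← sub_self 0]; exact hdecay₁.sub hdecay₂)
  exact fun x hx => sub_eq_zero.1 (hzero x hx)

/-- uniqueness for the external Dirichlet generalized harmonic problem:
Let `E = ⋃ k, l k ⊆ S_R` be a finite union of circles, each `l k` being the nonempty
non-degenerate intersection of the sphere `S_R` with an affine plane.  If `u₁`, `u₂`
are harmonic on `{‖x‖ > R}`, continuous on `{‖x‖ ≥ R} \ E`, bounded on `{‖x‖ ≥ R}`,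
agree on `S_R \ E`, and both tend to `0` at infinity, then `u₁ = u₂` on `{‖x‖ > R}`. -/
theorem exterior_generalized_dirichlet_unique
    (R : ℝ) (hR : 0 < R) (n : ℕ) (l : Fin n → Set E3)
    (hl : ∀ k : Fin n, ∃ (a : E3) (b : ℝ), a ≠ 0 ∧ |b| < R * ‖a‖ ∧
      l k = {x : E3 | ‖x‖ = R ∧ (inner ℝ a x : ℝ) = b})
    (u₁ u₂ : E3 → ℝ)
    (hharm₁ : IsHarmonicOn u₁ {x : E3 | R < ‖x‖})
    (hharm₂ : IsHarmonicOn u₂ {x : E3 | R < ‖x‖})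
    (hcont₁ : ContinuousOn u₁ ({x : E3 | R ≤ ‖x‖} \ ⋃ k, l k))
    (hcont₂ : ContinuousOn u₂ ({x : E3 | R ≤ ‖x‖} \ ⋃ k, l k))
    (hbdd₁ : ∃ c : ℝ, ∀ x : E3, R ≤ ‖x‖ → |u₁ x| ≤ c)
    (hbdd₂ : ∃ c : ℝ, ∀ x : E3, R ≤ ‖x‖ → |u₂ x| ≤ c)
    (hagree : ∀ y : E3, ‖y‖ = R → y ∉ ⋃ k, l k → u₁ y = u₂ y)
    (hdecay₁ : Filter.Tendsto u₁ (Filter.comap norm Filter.atTop) (nhds 0))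
    (hdecay₂ : Filter.Tendsto u₂ (Filter.comap norm Filter.atTop) (nhds 0)) :
    ∀ x : E3, R < ‖x‖ → u₁ x = u₂ x :=
  exterior_generalized_dirichlet_unique_general R n l hl u₁ u₂ hharm₁ hharm₂ hcont₁ hcont₂ hbdd₁
    hbdd₂ hagree hdecay₁ hdecay₂
end

section
/- Let R > 0, c > 0, and let v : ℝ³ → ℝ be harmonic on the open ball {ξ ∈ ℝ³ : ‖ξ‖ < R} with |v(ξ)| ≤ c for all ‖ξ‖ < R. Define u(x) = (R/‖x‖)·v((R²/‖x‖²)·x) for ‖x‖ > R. Then: (i) u is harmonic on {x : ‖x‖ > R}; (ii) |u(x)| ≤ c·R/‖x‖ ≤ c for every x with ‖x‖ > R, so u is bounded and u(x) → 0 as ‖x‖ → ∞; (iii) for every boundary point y with ‖y‖ = R at which v extends continuously (from inside the ball) with value g(y), the function u(x) tends to g(y) as x → y with ‖x‖ > R. Hence u solves the external Dirichlet generalized harmonic problem whenever v solves the corresponding internal problem. -/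
/-!
Write `ρ x = R / ‖x‖` and `K` for the inversion in the sphere `‖x‖ = R`, so that the transform is
`u = ρ · (v ∘ K)`. The function `ρ` is harmonic in `ℝ³ \ {0}`, and `K` is conformal: its
derivative is `R² / ‖x‖²` times a reflection, while `ΔK x = -2 R² x / ‖x‖⁴`. The product and chain
rules for the Laplacian then give `Δu x = (R / ‖x‖) ^ 5 * Δv (K x)`, the first-order terms
`2 ∇ρ · ∇(v ∘ K)` and `ρ ∇v · ΔK` cancelling. Since `K` maps the exterior of the sphere into the
ball and fixes the sphere pointwise, the bound `|u x| ≤ c R / ‖x‖` and the boundary limits of `u`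
are inherited from those of `v`.
-/

open scoped RealInnerProductSpace

open Filter Topology EuclideanGeometry

section SecondDerivative

variable {E G H : Type*} [NormedAddCommGroup E] [NormedSpace ℝ E] [NormedAddCommGroup G]
  [NormedSpace ℝ G] [NormedAddCommGroup H] [NormedSpace ℝ H] {x : E}

theorem ContDiffAt.eventually_differentiableAt {f : E → G} (hf : ContDiffAt ℝ 2 f x) :
    ∀ᶠ y in 𝓝 x, DifferentiableAt ℝ f y :=
  (hf.eventually (by simp)).mono fun _ hy ↦ hy.differentiableAt (by norm_num)

theorem ContDiffAt.differentiableAt_fderiv {f : E → G} (hf : ContDiffAt ℝ 2 f x) :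
    DifferentiableAt ℝ (fderiv ℝ f) x :=
  (hf.fderiv_right (m := 1) (by norm_num)).differentiableAt (by norm_num)

theorem hasFDerivAt_fderiv_apply {f : E → G} (hf : DifferentiableAt ℝ (fderiv ℝ f) x) (e' : E) :
    HasFDerivAt (fun y ↦ fderiv ℝ f y e') ((fderiv ℝ (fderiv ℝ f) x).flip e') x := by
  simpa using hf.hasFDerivAt.clm_apply (hasFDerivAt_const e' x)

theorem fderiv_fderiv_apply {f : E → G} (hf : DifferentiableAt ℝ (fderiv ℝ f) x) (e e' : E) :
    fderiv ℝ (fderiv ℝ f) x e e' = fderiv ℝ (fun y ↦ fderiv ℝ f y e') x e := by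
  rw [(hasFDerivAt_fderiv_apply hf e').fderiv, ContinuousLinearMap.flip_apply]

theorem fderiv_fderiv_mul_apply {f g : E → ℝ} (hf : ContDiffAt ℝ 2 f x) (hg : ContDiffAt ℝ 2 g x)
    (e e' : E) :
    fderiv ℝ (fderiv ℝ (fun y ↦ f y * g y)) x e e' =
      f x * fderiv ℝ (fderiv ℝ g) x e e' + fderiv ℝ f x e * fderiv ℝ g x e'
        + fderiv ℝ f x e' * fderiv ℝ g x e + g x * fderiv ℝ (fderiv ℝ f) x e e' := by
  have hfg : (fun y ↦ fderiv ℝ (fun y ↦ f y * g y) y e') =ᶠ[𝓝 x]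
      fun y ↦ f y * fderiv ℝ g y e' + g y * fderiv ℝ f y e' := by
    filter_upwards [hf.eventually_differentiableAt, hg.eventually_differentiableAt]
      with y hfy hgy
    simp [fderiv_fun_mul hfy hgy]
  have hderiv : HasFDerivAt (fun y ↦ f y * fderiv ℝ g y e' + g y * fderiv ℝ f y e') _ x :=
    (hf.differentiableAt (by norm_num)).hasFDerivAt.mul
      (hasFDerivAt_fderiv_apply hg.differentiableAt_fderiv e') |>.add
    ((hg.differentiableAt (by norm_num)).hasFDerivAt.mul
      (hasFDerivAt_fderiv_apply hf.differentiableAt_fderiv e'))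
  rw [fderiv_fderiv_apply (hf.mul hg).differentiableAt_fderiv, hfg.fderiv_eq, hderiv.fderiv]
  simp only [add_apply, smul_apply, ContinuousLinearMap.flip_apply, smul_eq_mul]
  ring

theorem fderiv_fderiv_comp_apply {v : G → H} {K : E → G} (hv : ContDiffAt ℝ 2 v (K x))
    (hK : ContDiffAt ℝ 2 K x) (e e' : E) :
    fderiv ℝ (fderiv ℝ (v ∘ K)) x e e' =
      fderiv ℝ (fderiv ℝ v) (K x) (fderiv ℝ K x e) (fderiv ℝ K x e')
        + fderiv ℝ v (K x) (fderiv ℝ (fderiv ℝ K) x e e') := by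
  have hvK : (fun y ↦ fderiv ℝ (v ∘ K) y e') =ᶠ[𝓝 x]
      fun y ↦ fderiv ℝ v (K y) (fderiv ℝ K y e') := by
    filter_upwards [hK.eventually_differentiableAt,
      hK.continuousAt.eventually hv.eventually_differentiableAt] with y hKy hvy
    rw [fderiv_comp y hvy hKy, ContinuousLinearMap.comp_apply]
  have hderiv : HasFDerivAt (fun y ↦ fderiv ℝ v (K y) (fderiv ℝ K y e')) _ x :=
    (hv.differentiableAt_fderiv.hasFDerivAt.comp x
      (hK.differentiableAt (by norm_num)).hasFDerivAt).clm_apply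
    (hasFDerivAt_fderiv_apply hK.differentiableAt_fderiv e')
  rw [fderiv_fderiv_apply (hv.comp x hK).differentiableAt_fderiv, hvK.fderiv_eq, hderiv.fderiv]
  simp [add_comm]

end SecondDerivative

section Inversion

variable {F : Type*} [NormedAddCommGroup F] [InnerProductSpace ℝ F] {x : F}

theorem inversion_zero (R : ℝ) (x : F) : inversion 0 R x = (R ^ 2 / ‖x‖ ^ 2) • x := by
  simp [inversion, div_pow]

theorem norm_inversion_zero (R : ℝ) (x : F) : ‖inversion 0 R x‖ = R ^ 2 / ‖x‖ := by
  simpa using dist_inversion_center (0 : F) x R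

theorem norm_inversion_zero_lt {R : ℝ} (hR : 0 < R) (hx : R < ‖x‖) : ‖inversion 0 R x‖ < R := by
  rw [norm_inversion_zero, div_lt_iff₀ (hR.trans hx)]
  nlinarith

theorem hasFDerivAt_norm (hx : x ≠ 0) : HasFDerivAt (‖·‖) (‖x‖⁻¹ • innerSL ℝ x) x := by
  have hsqrt := (hasStrictFDerivAt_norm_sq x).hasFDerivAt.sqrt (by simpa using hx)
  simp only [Real.sqrt_sq (norm_nonneg _)] at hsqrt
  refine hsqrt.congr_fderiv ?_
  ext y
  simp only [one_div, mul_inv_rev, smul_apply, coe_innerSL_apply, nsmul_eq_mul, Nat.cast_ofNat,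
    smul_eq_mul]
  field_simp

theorem hasFDerivAt_inv_norm_pow (hx : x ≠ 0) (k : ℕ) :
    HasFDerivAt (fun y ↦ (‖y‖ ^ k)⁻¹) ((-k / ‖x‖ ^ (k + 2)) • innerSL ℝ x) x := by
  have hx' : ‖x‖ ≠ 0 := norm_ne_zero_iff.mpr hx
  have hpow := ((hasDerivAt_pow k ‖x‖).fun_inv (pow_ne_zero k hx')).comp_hasFDerivAt x
    (hasFDerivAt_norm hx)
  refine hpow.congr_fderiv ?_
  ext y
  rcases k with _ | k
  · simp
  · simp only [Nat.cast_add, Nat.cast_one, add_tsub_cancel_right, smul_apply, coe_innerSL_apply,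
      smul_eq_mul, neg_add_rev]
    field_simp
    ring

theorem contDiffAt_div_norm (R : ℝ) (hx : x ≠ 0) : ContDiffAt ℝ 2 (fun y : F ↦ R / ‖y‖) x :=
  contDiffAt_const.div (contDiffAt_norm ℝ hx) (norm_ne_zero_iff.mpr hx)

theorem contDiffAt_inversion_zero (R : ℝ) (hx : x ≠ 0) : ContDiffAt ℝ 2 (inversion 0 R) x :=
  contDiffAt_const.inversion contDiffAt_const contDiffAt_id hx

theorem hasFDerivAt_div_norm (R : ℝ) (hx : x ≠ 0) :
    HasFDerivAt (fun y ↦ R / ‖y‖) ((-R / ‖x‖ ^ 3) • innerSL ℝ x) x := by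
  have h := (hasFDerivAt_inv_norm_pow hx 1).const_mul R
  simp only [pow_one, ← div_eq_mul_inv] at h
  refine h.congr_fderiv ?_
  ext y
  simp only [Nat.cast_one, Nat.reduceAdd, smul_apply, coe_innerSL_apply, smul_eq_mul]
  ring

theorem hasFDerivAt_inner_left (e : F) : HasFDerivAt (fun y ↦ ⟪y, e⟫) (innerSL ℝ e) x := by
  simpa [real_inner_comm] using (innerSL ℝ e).hasFDerivAt (x := x)

theorem fderiv_fderiv_div_norm_apply (R : ℝ) (hx : x ≠ 0) (e e' : F) :
    fderiv ℝ (fderiv ℝ fun y ↦ R / ‖y‖) x e e' =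
      R * (3 * ⟪x, e⟫ * ⟪x, e'⟫ / ‖x‖ ^ 5 - ⟪e, e'⟫ / ‖x‖ ^ 3) := by
  have hρ : (fun y ↦ fderiv ℝ (fun y ↦ R / ‖y‖) y e') =ᶠ[𝓝 x]
      fun y ↦ -R * (‖y‖ ^ 3)⁻¹ * ⟪y, e'⟫ := by
    filter_upwards [isOpen_ne.mem_nhds hx] with y hy
    rw [(hasFDerivAt_div_norm R hy).fderiv]
    simp only [smul_apply, coe_innerSL_apply, smul_eq_mul, neg_mul]
    ring
  have hderiv : HasFDerivAt (fun y ↦ -R * (‖y‖ ^ 3)⁻¹ * ⟪y, e'⟫) _ x :=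
    ((hasFDerivAt_inv_norm_pow hx 3).const_mul (-R)).mul (hasFDerivAt_inner_left e')
  rw [fderiv_fderiv_apply (contDiffAt_div_norm R hx).differentiableAt_fderiv, hρ.fderiv_eq,
    hderiv.fderiv]
  simp only [neg_mul, neg_smul, Nat.cast_ofNat, Nat.reduceAdd, smul_neg, add_apply, neg_apply,
    smul_apply, coe_innerSL_apply, smul_eq_mul]
  field_simp
  rw [real_inner_comm e' e]
  ring

theorem fderiv_inversion_zero_apply (R : ℝ) (hx : x ≠ 0) (e : F) :
    fderiv ℝ (inversion 0 R) x e = (R ^ 2 / ‖x‖ ^ 2) • e - (2 * R ^ 2 * ⟪x, e⟫ / ‖x‖ ^ 4) • x := by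
  have h : HasFDerivAt (fun y : F ↦ (R ^ 2 * (‖y‖ ^ 2)⁻¹) • y) _ x :=
    ((hasFDerivAt_inv_norm_pow hx 2).const_mul (R ^ 2)).smul (hasFDerivAt_id x)
  rw [show inversion (0 : F) R = fun y ↦ (R ^ 2 * (‖y‖ ^ 2)⁻¹) • y from
    funext fun y ↦ by rw [inversion_zero, div_eq_mul_inv], h.fderiv]
  simp only [Nat.cast_ofNat, Nat.reduceAdd, add_apply, smul_apply, ContinuousLinearMap.id_apply,
    ContinuousLinearMap.smulRight_apply, coe_innerSL_apply, smul_eq_mul]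
  match_scalars <;> ring

theorem fderiv_fderiv_inversion_zero_apply (R : ℝ) (hx : x ≠ 0) (e e' : F) :
    fderiv ℝ (fderiv ℝ (inversion 0 R)) x e e' =
      (R ^ 2 / ‖x‖ ^ 4) • ((8 * ⟪x, e⟫ * ⟪x, e'⟫ / ‖x‖ ^ 2 - 2 * ⟪e, e'⟫) • x
        - (2 * ⟪x, e⟫) • e' - (2 * ⟪x, e'⟫) • e) := by
  have hK : (fun y ↦ fderiv ℝ (inversion 0 R) y e') =ᶠ[𝓝 x]
      fun y ↦ (R ^ 2 * (‖y‖ ^ 2)⁻¹) • e' - (2 * R ^ 2 * ⟪y, e'⟫ * (‖y‖ ^ 4)⁻¹) • y := by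
    filter_upwards [isOpen_ne.mem_nhds hx] with y hy
    rw [fderiv_inversion_zero_apply R hy, div_eq_mul_inv, div_eq_mul_inv]
  have hderiv : HasFDerivAt
      (fun y ↦ (R ^ 2 * (‖y‖ ^ 2)⁻¹) • e' - (2 * R ^ 2 * ⟪y, e'⟫ * (‖y‖ ^ 4)⁻¹) • y) _ x :=
    (((hasFDerivAt_inv_norm_pow hx 2).const_mul (R ^ 2)).smul_const e').sub
      ((((hasFDerivAt_inner_left e').const_mul (2 * R ^ 2)).mul
        (hasFDerivAt_inv_norm_pow hx 4)).smul (hasFDerivAt_id x))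
  rw [fderiv_fderiv_apply (contDiffAt_inversion_zero R hx).differentiableAt_fderiv, hK.fderiv_eq,
    hderiv.fderiv]
  simp only [Nat.cast_ofNat, Nat.reduceAdd, Pi.mul_apply, sub_apply,
    ContinuousLinearMap.smulRight_apply, smul_apply, coe_innerSL_apply, smul_eq_mul, add_apply,
    ContinuousLinearMap.id_apply]
  rw [real_inner_comm e' e]
  match_scalars <;> ring

end Inversion

theorem OrthonormalBasis.sum_inner_mul_apply {ι F : Type*} [Fintype ι] [NormedAddCommGroup F]
    [InnerProductSpace ℝ F] (b : OrthonormalBasis ι ℝ F) (L : F →L[ℝ] ℝ) (x : F) :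
    ∑ i, ⟪x, b i⟫ * L (b i) = L x := by
  conv_rhs => rw [← b.sum_repr' x]
  simp [real_inner_comm]

section Kelvin

variable {F : Type*} [NormedAddCommGroup F] [InnerProductSpace ℝ F] {R : ℝ} {v : F → ℝ} {x : F}

/-- The Kelvin transform in three dimensions; in dimension `n` the factor `R / ‖x‖` becomes
`(R / ‖x‖) ^ (n - 2)`. -/
noncomputable def kelvinTransform (R : ℝ) (v : F → ℝ) (x : F) : ℝ :=
  R / ‖x‖ * v (inversion 0 R x)

theorem kelvinTransform_eq_mul (R : ℝ) (v : F → ℝ) :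
    kelvinTransform R v = fun y ↦ R / ‖y‖ * (v ∘ inversion 0 R) y :=
  rfl

theorem contDiffAt_kelvinTransform (hx : x ≠ 0) (hv : ContDiffAt ℝ 2 v (inversion 0 R x)) :
    ContDiffAt ℝ 2 (kelvinTransform R v) x :=
  (contDiffAt_div_norm R hx).mul (hv.comp x (contDiffAt_inversion_zero R hx))

theorem abs_kelvinTransform_le {c : ℝ} (hR : 0 < R) (hv : ∀ ξ : F, ‖ξ‖ < R → |v ξ| ≤ c)
    (hx : R < ‖x‖) : |kelvinTransform R v x| ≤ c * R / ‖x‖ := by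
  rw [kelvinTransform, abs_mul, abs_of_pos (div_pos hR (hR.trans hx))]
  calc R / ‖x‖ * |v (inversion 0 R x)| ≤ R / ‖x‖ * c := by
        gcongr
        exact hv _ (norm_inversion_zero_lt hR hx)
    _ = c * R / ‖x‖ := by ring

theorem tendsto_kelvinTransform_cobounded {c : ℝ} (hR : 0 < R)
    (hv : ∀ ξ : F, ‖ξ‖ < R → |v ξ| ≤ c) :
    Tendsto (kelvinTransform R v) (Bornology.cobounded F) (𝓝 0) := by
  have hnorm := tendsto_norm_cobounded_atTop (E := F)
  refine squeeze_zero_norm' ?_ (by simpa using hnorm.inv_tendsto_atTop.const_mul (c * R))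
  filter_upwards [hnorm.eventually_gt_atTop R] with x hx
  simpa [div_eq_mul_inv] using abs_kelvinTransform_le hR hv hx

theorem tendsto_kelvinTransform_nhdsWithin {y : F} {g : ℝ} (hR : 0 < R) (hy : ‖y‖ = R)
    (hv : Tendsto v (𝓝[{ξ | ‖ξ‖ < R}] y) (𝓝 g)) :
    Tendsto (kelvinTransform R v) (𝓝[{x | R < ‖x‖}] y) (𝓝 g) := by
  have hy0 : y ≠ 0 := norm_ne_zero_iff.mp (hy ▸ hR.ne')
  have hρ : Tendsto (fun x ↦ R / ‖x‖) (𝓝[{x | R < ‖x‖}] y) (𝓝 1) := by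
    have h := (contDiffAt_div_norm R hy0).continuousAt.tendsto.mono_left
      (nhdsWithin_le_nhds (s := {x : F | R < ‖x‖}))
    rwa [hy, div_self hR.ne'] at h
  have hK : Tendsto (inversion 0 R) (𝓝[{x | R < ‖x‖}] y) (𝓝[{ξ | ‖ξ‖ < R}] y) := by
    refine tendsto_nhdsWithin_iff.mpr
      ⟨?_, eventually_nhdsWithin_of_forall fun x hx ↦ norm_inversion_zero_lt hR hx⟩
    have h := (contDiffAt_inversion_zero R hy0).continuousAt.tendsto.mono_left
      (nhdsWithin_le_nhds (s := {x : F | R < ‖x‖}))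
    rwa [inversion_of_mem_sphere (mem_sphere_zero_iff_norm.mpr hy)] at h
  simpa [kelvinTransform_eq_mul] using hρ.mul (hv.comp hK)

end Kelvin

section Laplacian

local notation "b" => EuclideanSpace.basisFun (Fin 3) ℝ

variable {x : E3}

theorem lap_eq_sum_fderiv_fderiv {f : E3 → ℝ} (hf : DifferentiableAt ℝ (fderiv ℝ f) x) :
    lap f x = ∑ i, fderiv ℝ (fderiv ℝ f) x (b i) (b i) := by
  simp [lap, fderiv_fderiv_apply hf]

theorem Filter.EventuallyEq.lap_eq {f g : E3 → ℝ} (h : f =ᶠ[𝓝 x] g) : lap f x = lap g x := by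
  simp only [lap]
  refine Finset.sum_congr rfl fun i _ ↦ ?_
  have hi : (fun y ↦ fderiv ℝ f y (EuclideanSpace.single i 1)) =ᶠ[𝓝 x]
      fun y ↦ fderiv ℝ g y (EuclideanSpace.single i 1) :=
    (h.fderiv (𝕜 := ℝ)).mono fun y hy ↦ by simp only [hy]
  rw [hi.fderiv_eq]

theorem IsHarmonicOn.congr {f g : E3 → ℝ} {U : Set E3} (hf : IsHarmonicOn f U) (hU : IsOpen U)
    (h : Set.EqOn f g U) : IsHarmonicOn g U := by
  refine ⟨hf.1.congr fun y hy ↦ (h hy).symm, fun y hy ↦ ?_⟩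
  have hfg : f =ᶠ[𝓝 y] g := eventually_of_mem (hU.mem_nhds hy) h
  rw [← hfg.lap_eq, hf.2 y hy]

theorem lap_mul {f g : E3 → ℝ} (hf : ContDiffAt ℝ 2 f x) (hg : ContDiffAt ℝ 2 g x) :
    lap (fun y ↦ f y * g y) x =
      f x * lap g x + 2 * ∑ i, fderiv ℝ f x (b i) * fderiv ℝ g x (b i) + g x * lap f x := by
  simp only [lap_eq_sum_fderiv_fderiv (hf.mul hg).differentiableAt_fderiv,
    lap_eq_sum_fderiv_fderiv hf.differentiableAt_fderiv,
    lap_eq_sum_fderiv_fderiv hg.differentiableAt_fderiv, fderiv_fderiv_mul_apply hf hg,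
    Finset.mul_sum, ← Finset.sum_add_distrib]
  exact Finset.sum_congr rfl fun i _ ↦ by ring

theorem lap_div_norm (R : ℝ) (hx : x ≠ 0) : lap (fun y ↦ R / ‖y‖) x = 0 := by
  have hsum := (b).sum_inner_mul_apply (innerSL ℝ x) x
  simp only [innerSL_apply_apply, real_inner_self_eq_norm_sq] at hsum
  simp only [lap_eq_sum_fderiv_fderiv (contDiffAt_div_norm R hx).differentiableAt_fderiv,
    fderiv_fderiv_div_norm_apply R hx, real_inner_self_eq_norm_sq, OrthonormalBasis.norm_eq_one]
  have hterm : ∀ i, R * (3 * ⟪x, b i⟫ * ⟪x, b i⟫ / ‖x‖ ^ 5 - 1 ^ 2 / ‖x‖ ^ 3) =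
      3 * R / ‖x‖ ^ 5 * (⟪x, b i⟫ * ⟪x, b i⟫) - R / ‖x‖ ^ 3 := fun i ↦ by ring
  simp only [hterm, Finset.sum_sub_distrib, ← Finset.mul_sum, hsum, Finset.sum_const,
    Finset.card_univ, Fintype.card_fin, nsmul_eq_mul]
  field_simp
  ring

theorem lap_comp_inversion_zero (R : ℝ) (hx : x ≠ 0) {v : E3 → ℝ}
    (hv : ContDiffAt ℝ 2 v (inversion 0 R x)) :
    lap (v ∘ inversion 0 R) x = (R / ‖x‖) ^ 4 * lap v (inversion 0 R x)
      - 2 * R ^ 2 / ‖x‖ ^ 4 * fderiv ℝ v (inversion 0 R x) x := by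
  have hK := contDiffAt_inversion_zero R hx
  rw [lap_eq_sum_fderiv_fderiv (hv.comp x hK).differentiableAt_fderiv,
    lap_eq_sum_fderiv_fderiv hv.differentiableAt_fderiv]
  simp only [fderiv_fderiv_comp_apply hv hK, fderiv_inversion_zero_apply R hx,
    fderiv_fderiv_inversion_zero_apply R hx, map_sub, map_smul, sub_apply, smul_apply, smul_eq_mul,
    real_inner_self_eq_norm_sq, OrthonormalBasis.norm_eq_one]
  set W := fderiv ℝ (fderiv ℝ v) (inversion 0 R x)
  set Dv := fderiv ℝ v (inversion 0 R x)
  have hWx := (b).sum_inner_mul_apply (W x) x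
  have hWx' := (b).sum_inner_mul_apply (W.flip x) x
  have hDv := (b).sum_inner_mul_apply Dv x
  have hnorm := (b).sum_inner_mul_apply (innerSL ℝ x) x
  simp only [ContinuousLinearMap.flip_apply, innerSL_apply_apply, real_inner_self_eq_norm_sq]
    at hWx' hnorm
  have hterm : ∀ i, R ^ 2 / ‖x‖ ^ 2 * (R ^ 2 / ‖x‖ ^ 2 * W (b i) (b i)
        - 2 * R ^ 2 * ⟪x, b i⟫ / ‖x‖ ^ 4 * W x (b i))
      - 2 * R ^ 2 * ⟪x, b i⟫ / ‖x‖ ^ 4 * (R ^ 2 / ‖x‖ ^ 2 * W (b i) x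
        - 2 * R ^ 2 * ⟪x, b i⟫ / ‖x‖ ^ 4 * W x x)
      + R ^ 2 / ‖x‖ ^ 4 * ((8 * ⟪x, b i⟫ * ⟪x, b i⟫ / ‖x‖ ^ 2 - 2 * 1 ^ 2) * Dv x
        - 2 * ⟪x, b i⟫ * Dv (b i) - 2 * ⟪x, b i⟫ * Dv (b i)) =
      (R / ‖x‖) ^ 4 * W (b i) (b i)
        - 2 * R ^ 4 / ‖x‖ ^ 6 * (⟪x, b i⟫ * W x (b i))
        - 2 * R ^ 4 / ‖x‖ ^ 6 * (⟪x, b i⟫ * W (b i) x)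
        + (4 * R ^ 4 / ‖x‖ ^ 8 * W x x + 8 * R ^ 2 / ‖x‖ ^ 6 * Dv x) * (⟪x, b i⟫ * ⟪x, b i⟫)
        - 4 * R ^ 2 / ‖x‖ ^ 4 * (⟪x, b i⟫ * Dv (b i))
        - 2 * R ^ 2 / ‖x‖ ^ 4 * Dv x := fun i ↦ by ring
  simp only [hterm, Finset.sum_add_distrib, Finset.sum_sub_distrib, ← Finset.mul_sum, hWx, hWx',
    hDv, hnorm, Finset.sum_const, Finset.card_univ, Fintype.card_fin, nsmul_eq_mul]
  field_simp
  ring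

theorem lap_kelvinTransform {R : ℝ} {v : E3 → ℝ} (hx : x ≠ 0)
    (hv : ContDiffAt ℝ 2 v (inversion 0 R x)) :
    lap (kelvinTransform R v) x = (R / ‖x‖) ^ 5 * lap v (inversion 0 R x) := by
  have hK := contDiffAt_inversion_zero R hx
  have hρ := contDiffAt_div_norm R hx
  rw [kelvinTransform_eq_mul, lap_mul hρ (hv.comp x hK), lap_div_norm R hx,
    lap_comp_inversion_zero R hx hv]
  have hgrad : ∑ i, fderiv ℝ (fun y ↦ R / ‖y‖) x (b i) * fderiv ℝ (v ∘ inversion 0 R) x (b i) =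
      R ^ 3 / ‖x‖ ^ 5 * fderiv ℝ v (inversion 0 R x) x := by
    simp only [(hasFDerivAt_div_norm R hx).fderiv, smul_apply, innerSL_apply_apply, smul_eq_mul,
      mul_assoc, ← Finset.mul_sum, OrthonormalBasis.sum_inner_mul_apply]
    rw [fderiv_comp x (hv.differentiableAt (by norm_num)) (hK.differentiableAt (by norm_num)),
      ContinuousLinearMap.comp_apply, fderiv_inversion_zero_apply R hx]
    simp only [map_sub, map_smul, smul_eq_mul, real_inner_self_eq_norm_sq]
    field_simp
    ring
  rw [hgrad]
  field_simp
  ring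

end Laplacian

theorem isHarmonicOn_kelvinTransform {R : ℝ} (hR : 0 < R) {v : E3 → ℝ}
    (hv : IsHarmonicOn v {ξ | ‖ξ‖ < R}) : IsHarmonicOn (kelvinTransform R v) {x | R < ‖x‖} := by
  have hball : IsOpen {ξ : E3 | ‖ξ‖ < R} := isOpen_lt continuous_norm continuous_const
  have hvK : ∀ x : E3, R < ‖x‖ → ContDiffAt ℝ 2 v (inversion 0 R x) := fun x hx ↦
    hv.1.contDiffAt (hball.mem_nhds (norm_inversion_zero_lt hR hx))
  have hx0 : ∀ x : E3, R < ‖x‖ → x ≠ 0 := fun x hx ↦ norm_pos_iff.mp (hR.trans hx)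
  refine ⟨fun x hx ↦ (contDiffAt_kelvinTransform (hx0 x hx) (hvK x hx)).contDiffWithinAt,
    fun x hx ↦ ?_⟩
  rw [lap_kelvinTransform (hx0 x hx) (hvK x hx), hv.2 _ (norm_inversion_zero_lt hR hx), mul_zero]

/-- If `v` is harmonic on the ball `{‖ξ‖ < R}` with `|v| ≤ c` there,
then `u(x) = (R/‖x‖)·v((R²/‖x‖²)·x)` is (i) harmonic on `{‖x‖ > R}`;
(ii) satisfies `|u(x)| ≤ c·R/‖x‖ ≤ c`, so it is bounded and tends to `0` at infinity;
(iii) at every boundary point `y` with `‖y‖ = R` where `v` extends continuously from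
inside with value `g`, the function `u` tends to `g` from the exterior.  Hence `u`
solves the external Dirichlet generalized harmonic problem whenever `v` solves the
corresponding internal one. -/
theorem kelvin_transform_solves_exterior_problem
    (R c : ℝ) (hR : 0 < R) (hc : 0 < c) (v : E3 → ℝ)
    (hharm : IsHarmonicOn v {ξ : E3 | ‖ξ‖ < R})
    (hbdd : ∀ ξ : E3, ‖ξ‖ < R → |v ξ| ≤ c)
    (u : E3 → ℝ)
    (hu : ∀ x : E3, R < ‖x‖ → u x = (R / ‖x‖) * v ((R ^ 2 / ‖x‖ ^ 2) • x)) :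
    IsHarmonicOn u {x : E3 | R < ‖x‖} ∧
    (∀ x : E3, R < ‖x‖ → |u x| ≤ c * R / ‖x‖ ∧ c * R / ‖x‖ ≤ c) ∧
    Filter.Tendsto u (Filter.comap norm Filter.atTop) (nhds 0) ∧
    (∀ (y : E3) (g : ℝ), ‖y‖ = R →
      Filter.Tendsto v (nhdsWithin y {ξ : E3 | ‖ξ‖ < R}) (nhds g) →
      Filter.Tendsto u (nhdsWithin y {x : E3 | R < ‖x‖}) (nhds g)) := by
  have hext : {x : E3 | R < ‖x‖} ∈ Bornology.cobounded E3 :=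
    tendsto_norm_cobounded_atTop.eventually_gt_atTop R
  have hKu : Set.EqOn (kelvinTransform R v) u {x | R < ‖x‖} := fun x hx ↦ by
    rw [hu x hx, kelvinTransform, inversion_zero]
  refine ⟨(isHarmonicOn_kelvinTransform hR hharm).congr (isOpen_lt continuous_const continuous_norm)
    hKu, fun x hx ↦ ⟨hKu hx ▸ abs_kelvinTransform_le hR hbdd hx, ?_⟩, ?_, fun y g hy hg ↦ ?_⟩
  · rw [div_le_iff₀ (hR.trans hx)]
    nlinarith
  · rw [comap_norm_atTop]
    exact (tendsto_kelvinTransform_cobounded hR hbdd).congr' (eventually_of_mem hext hKu)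
  · exact (tendsto_kelvinTransform_nhdsWithin hR hy hg).congr'
      (eventually_nhdsWithin_of_forall hKu)
end
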